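/- Define K(r, V) = inf over all real random variables Π with E[Π] ≥ r and Var(Π) ≤ V of E[Φ(Π)]. Then K is jointly continuous in (r, V) on ℝ × (0, ∞). -/

import Mathlib

open MeasureTheory ProbabilityTheory

/-!
If `Π` has mean `m ≥ r` and variance at most `V`, then `a (Π - m) + r'` with
`a = √(min V V' / V) ≤ 1` has mean `r'` and variance at most `V'`. As `Φ` is monotone and
1-Lipschitz, `Φ(a (x - m) + r') ≤ Φ(x) + |r' - r| + (1 - a) |x - m|`, and
`|x - m| ≤ (1 + (x - m)²) / 2` bounds the expectation of the last term by `(1 - a)(1 + V) / 2`.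
So `K(r', V') ≤ K(r, V) + ω(r, V, r', V')` for a modulus `ω` continuous in either pair and
vanishing on the diagonal; using this in both directions squeezes `K`.
-/

/-- Standard Gaussian density. -/
noncomputable def gaussPDF (x : ℝ) : ℝ := Real.exp (-(x ^ 2) / 2) / Real.sqrt (2 * Real.pi)

/-- Standard Gaussian CDF. -/
noncomputable def gaussCDF (x : ℝ) : ℝ := ∫ t in Set.Iic x, gaussPDF t

/-- `K(r, V)`: infimum of `E[Φ(Π)]` over laws `μ` of real random variables `Π`
with `E[Π] ≥ r` and `Var(Π) ≤ V`. -/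
noncomputable def Kfun (r V : ℝ) : ℝ :=
  sInf { e : ℝ | ∃ μ : Measure ℝ, IsProbabilityMeasure μ ∧ MemLp id 2 μ ∧
    r ≤ ∫ x, x ∂μ ∧ variance id μ ≤ V ∧ e = ∫ x, gaussCDF x ∂μ }

lemma gaussPDF_eq_gaussianPDFReal : gaussPDF = gaussianPDFReal 0 1 := by
  ext x
  simp [gaussPDF, gaussianPDFReal, div_eq_inv_mul]

lemma gaussPDF_nonneg (x : ℝ) : 0 ≤ gaussPDF x :=
  gaussPDF_eq_gaussianPDFReal ▸ gaussianPDFReal_nonneg 0 1 x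

lemma integrable_gaussPDF : Integrable gaussPDF :=
  gaussPDF_eq_gaussianPDFReal ▸ integrable_gaussianPDFReal 0 1

lemma gaussPDF_le_one (x : ℝ) : gaussPDF x ≤ 1 := by
  have h2π : 1 ≤ Real.sqrt (2 * Real.pi) :=
    Real.one_le_sqrt.2 (by linarith [Real.pi_gt_three])
  rw [gaussPDF, div_le_one (by linarith)]
  calc Real.exp (-(x ^ 2) / 2) ≤ 1 := Real.exp_le_one_iff.2 (by nlinarith [sq_nonneg x])
    _ ≤ _ := h2π

lemma gaussCDF_nonneg (x : ℝ) : 0 ≤ gaussCDF x :=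
  setIntegral_nonneg measurableSet_Iic fun t _ => gaussPDF_nonneg t

lemma gaussCDF_le_one (x : ℝ) : gaussCDF x ≤ 1 := by
  calc gaussCDF x ≤ ∫ t, gaussPDF t :=
        setIntegral_le_integral integrable_gaussPDF (.of_forall gaussPDF_nonneg)
    _ = 1 := by rw [gaussPDF_eq_gaussianPDFReal, integral_gaussianPDFReal_eq_one 0 one_ne_zero]

lemma gaussCDF_sub_gaussCDF {x y : ℝ} :
    gaussCDF x - gaussCDF y = ∫ t in y..x, gaussPDF t :=
  intervalIntegral.integral_Iic_sub_Iic integrable_gaussPDF.integrableOn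
    integrable_gaussPDF.integrableOn

lemma monotone_gaussCDF : Monotone gaussCDF := fun y x hyx => by
  rw [← sub_nonneg, gaussCDF_sub_gaussCDF]
  exact intervalIntegral.integral_nonneg hyx fun t _ => gaussPDF_nonneg t

lemma gaussCDF_sub_le (x y : ℝ) : gaussCDF x - gaussCDF y ≤ |x - y| := by
  rcases le_total x y with hxy | hyx
  · linarith [monotone_gaussCDF hxy, abs_nonneg (x - y)]
  · calc gaussCDF x - gaussCDF y = ∫ t in y..x, gaussPDF t := gaussCDF_sub_gaussCDF
      _ ≤ ∫ t in y..x, (1 : ℝ) := intervalIntegral.integral_mono_on hyx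
          integrable_gaussPDF.intervalIntegrable intervalIntegrable_const
          fun t _ => gaussPDF_le_one t
      _ = x - y := by simp
      _ ≤ |x - y| := le_abs_self _

lemma integrable_gaussCDF_comp {α : Type*} [MeasurableSpace α] {μ : Measure α}
    [IsFiniteMeasure μ] {f : α → ℝ} (hf : AEMeasurable f μ) :
    Integrable (fun x => gaussCDF (f x)) μ :=
  .of_bound (monotone_gaussCDF.measurable.comp_aemeasurable hf).aestronglyMeasurable 1
    (.of_forall fun x => by
      rw [Real.norm_of_nonneg (gaussCDF_nonneg _)]; exact gaussCDF_le_one _)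

section AffineMap

variable {μ : Measure ℝ} [IsProbabilityMeasure μ] (a b : ℝ)

lemma memLp_id_map_affine (hμ : MemLp id 2 μ) : MemLp id 2 (μ.map fun x => a * x + b) := by
  rw [memLp_map_measure_iff aestronglyMeasurable_id (by fun_prop)]
  exact (hμ.const_mul a).add (memLp_const b)

lemma integral_id_map_affine (hμ : Integrable id μ) :
    ∫ x, x ∂(μ.map fun x => a * x + b) = a * ∫ x, x ∂μ + b := by
  rw [integral_map (by fun_prop) (f := fun x : ℝ => x) (by fun_prop),
    integral_add (f := fun x => a * x) (hμ.const_mul a) (integrable_const b), integral_const_mul]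
  simp

lemma variance_id_map_affine :
    variance id (μ.map fun x => a * x + b) = a ^ 2 * variance id μ := by
  rw [variance_id_map (by fun_prop), variance_add_const (by fun_prop)]
  exact variance_const_mul a id μ

end AffineMap

lemma gaussCDF_affine_le {a m r r' : ℝ} (ha1 : a ≤ 1) (hrm : r ≤ m) (x : ℝ) :
    gaussCDF (a * x + (r' - a * m)) ≤ gaussCDF x + |r' - r| + (1 - a) * |x - m| := by
  have hshift : gaussCDF (x - m + r) ≤ gaussCDF x := monotone_gaussCDF (by linarith)
  have hdist : |a * x + (r' - a * m) - (x - m + r)| ≤ |r' - r| + (1 - a) * |x - m| := by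
    calc |a * x + (r' - a * m) - (x - m + r)| = |(r' - r) + (a - 1) * (x - m)| := by ring_nf
      _ ≤ |r' - r| + |a - 1| * |x - m| := (abs_add_le _ _).trans_eq (by rw [abs_mul])
      _ = |r' - r| + (1 - a) * |x - m| := by rw [abs_of_nonpos (by linarith : a - 1 ≤ 0)]; ring
  linarith [gaussCDF_sub_le (a * x + (r' - a * m)) (x - m + r)]

lemma integral_gaussCDF_affine_le {μ : Measure ℝ} [IsProbabilityMeasure μ] (hμ : MemLp id 2 μ)
    {a r r' : ℝ} (ha1 : a ≤ 1) (hr : r ≤ ∫ x, x ∂μ) :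
    ∫ x, gaussCDF (a * x + (r' - a * ∫ x, x ∂μ)) ∂μ
      ≤ ∫ x, gaussCDF x ∂μ + |r' - r| + (1 - a) * (1 + variance id μ) / 2 := by
  set m := ∫ x, x ∂μ
  have hsq : Integrable (fun x => (x - m) ^ 2) μ := (hμ.sub (memLp_const m)).integrable_sq
  have hpoint (x : ℝ) : gaussCDF (a * x + (r' - a * m))
      ≤ gaussCDF x + (|r' - r| + (1 - a) / 2) + (1 - a) / 2 * (x - m) ^ 2 := by
    have hamgm : |x - m| ≤ (1 + (x - m) ^ 2) / 2 := by
      nlinarith [sq_nonneg (|x - m| - 1), sq_abs (x - m)]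
    nlinarith [gaussCDF_affine_le (r' := r') ha1 hr x]
  have hΦ : Integrable (fun x => gaussCDF x) μ :=
    integrable_gaussCDF_comp (f := fun x => x) (by fun_prop)
  have hΦc : Integrable (fun x => gaussCDF x + (|r' - r| + (1 - a) / 2)) μ :=
    hΦ.add (integrable_const _)
  have hvar : variance id μ = ∫ x, (x - m) ^ 2 ∂μ := variance_eq_integral aemeasurable_id
  calc ∫ x, gaussCDF (a * x + (r' - a * m)) ∂μ
      ≤ ∫ x, gaussCDF x + (|r' - r| + (1 - a) / 2) + (1 - a) / 2 * (x - m) ^ 2 ∂μ :=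
        integral_mono (integrable_gaussCDF_comp (by fun_prop)) (hΦc.add (hsq.const_mul _)) hpoint
    _ = ∫ x, gaussCDF x ∂μ + |r' - r| + (1 - a) * (1 + variance id μ) / 2 := by
        rw [integral_add hΦc (hsq.const_mul _), integral_add hΦ (integrable_const _),
          integral_const_mul, integral_const, hvar]
        simp only [probReal_univ, one_smul]
        ring

lemma Kfun_le_integral {r V : ℝ} {μ : Measure ℝ} [IsProbabilityMeasure μ] (hμ : MemLp id 2 μ)
    (hr : r ≤ ∫ x, x ∂μ) (hV : variance id μ ≤ V) : Kfun r V ≤ ∫ x, gaussCDF x ∂μ :=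
  csInf_le ⟨0, by rintro _ ⟨ν, hν, -, -, -, rfl⟩; exact integral_nonneg gaussCDF_nonneg⟩
    ⟨μ, inferInstance, hμ, hr, hV, rfl⟩

lemma le_Kfun {r V c : ℝ} (hV : 0 ≤ V)
    (h : ∀ μ : Measure ℝ, IsProbabilityMeasure μ → MemLp id 2 μ → r ≤ ∫ x, x ∂μ →
      variance id μ ≤ V → c ≤ ∫ x, gaussCDF x ∂μ) : c ≤ Kfun r V := by
  refine le_csInf
    ⟨_, Measure.dirac r, inferInstance, ?_, by simp, by simpa [variance_dirac], rfl⟩ ?_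
  · exact (memLp_const r).ae_eq (by simp [Filter.EventuallyEq, ae_dirac_eq])
  · rintro _ ⟨μ, hμ, hL2, hr, hvar, rfl⟩
    exact h μ hμ hL2 hr hvar

noncomputable def Kmodulus (r V r' V' : ℝ) : ℝ :=
  |r' - r| + (1 - √(min V V' / V)) * (1 + V) / 2

lemma Kmodulus_self (r : ℝ) {V : ℝ} (hV : V ≠ 0) : Kmodulus r V r V = 0 := by
  simp [Kmodulus, div_self hV]

lemma Kfun_le_add_Kmodulus {r V r' V' : ℝ} (hV : 0 < V) (hV' : 0 ≤ V') :
    Kfun r' V' ≤ Kfun r V + Kmodulus r V r' V' := by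
  set a := √(min V V' / V)
  have ha1 : a ≤ 1 := Real.sqrt_le_one.2 ((div_le_one hV).2 (min_le_left _ _))
  have ha2 : a ^ 2 * V ≤ V' := by
    rw [Real.sq_sqrt (by positivity), div_mul_cancel₀ _ hV.ne']
    exact min_le_right _ _
  suffices h : Kfun r' V' - Kmodulus r V r' V' ≤ Kfun r V by linarith
  refine le_Kfun hV.le fun μ _ hμ hr hvar => ?_
  set m := ∫ x, x ∂μ
  have hint : Integrable id μ := hμ.integrable one_le_two
  have : IsProbabilityMeasure (μ.map fun x => a * x + (r' - a * m)) :=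
    Measure.isProbabilityMeasure_map (by fun_prop)
  have hK : Kfun r' V' ≤ ∫ x, gaussCDF (a * x + (r' - a * m)) ∂μ := by
    rw [← integral_map (by fun_prop) monotone_gaussCDF.measurable.aestronglyMeasurable]
    refine Kfun_le_integral (memLp_id_map_affine _ _ hμ) ?_ ?_
    · rw [integral_id_map_affine _ _ hint]; linarith
    · rw [variance_id_map_affine]
      exact (mul_le_mul_of_nonneg_left hvar (sq_nonneg a)).trans ha2
  have hΦ := integral_gaussCDF_affine_le hμ (r' := r') ha1 hr
  have hV1 : (1 - a) * (1 + variance id μ) / 2 ≤ (1 - a) * (1 + V) / 2 := by gcongr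
  simp only [Kmodulus]
  linarith

/-- `K` is jointly continuous in `(r, V)` on `ℝ × (0, ∞)`. -/
theorem stmt3 :
    ContinuousOn (fun p : ℝ × ℝ => Kfun p.1 p.2) (Set.univ ×ˢ Set.Ioi (0 : ℝ)) := by
  rintro p ⟨-, hV : 0 < p.2⟩
  have hup : ContinuousAt (fun q : ℝ × ℝ => Kmodulus p.1 p.2 q.1 q.2) p := by
    unfold Kmodulus; fun_prop
  have hlow : ContinuousAt (fun q : ℝ × ℝ => Kmodulus q.1 q.2 p.1 p.2) p := by
    unfold Kmodulus; fun_prop (disch := exact hV.ne')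
  have hup' := (tendsto_const_nhds (x := Kfun p.1 p.2)).add hup.tendsto
  have hlow' := (tendsto_const_nhds (x := Kfun p.1 p.2)).sub hlow.tendsto
  rw [Kmodulus_self _ hV.ne', add_zero] at hup'
  rw [Kmodulus_self _ hV.ne', sub_zero] at hlow'
  refine tendsto_of_tendsto_of_tendsto_of_le_of_le' (hlow'.mono_left nhdsWithin_le_nhds)
    (hup'.mono_left nhdsWithin_le_nhds) ?_ ?_
  all_goals
    filter_upwards [self_mem_nhdsWithin] with q hq
  · linarith [Kfun_le_add_Kmodulus (r := q.1) (r' := p.1) hq.2 hV.le]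
  · exact Kfun_le_add_Kmodulus hV hq.2.le
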